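/- arXiv:1306.2195 — 4 statements merged into one kernel-verified Lean document; each statement's English description precedes it below -/
import Mathlib

section
/- Let v : ℝ^m → ℍ be a measurable, square integrable vector field (re (v x) = 0 for all x and ∫ ‖v x‖² dx < ∞), n a purely imaginary unit quaternion, α ∈ ℝ, q = exp((α/2) • n), and let C = ∫ star (q * v x * star q) * v x dx. Then the squared norm of the bivector part of C satisfies ‖im C‖² = (Real.sin α)² * (∫ ‖v∥ x‖² dx)² + (2 - 2 * Real.cos α) * ‖∫ (v∥ x) * (v⊥ x) dx‖², where v⊥ x = ⟪v x, n⟫ • n and v∥ x = v x − v⊥ x. -/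
open Quaternion MeasureTheory

noncomputable instance : MeasurableSpace ℍ[ℝ] := borel _
instance : BorelSpace ℍ[ℝ] := ⟨rfl⟩

/-!
Write `v = a + b` with `a ⊥ n` in the rotation plane and `b ∥ n`. The rotor
`q = exp ((α/2) n) = cos (α/2) + sin (α/2) n` commutes with `b` and satisfies `a q̄ = q a`, so
`q v q̄ = q² a + b` with `q² = exp (α n)`. As `a² = -‖a‖²`, `b² = -‖b‖²` and `b a = -a b`,
the integrand is `‖a‖² q² + ‖b‖² + (1 - q²) a b`. Integrating, `C = S q² + T + (1 - q²) M`
with `S = ∫ ‖a‖²`, `T = ∫ ‖b‖²` and `M = ∫ a b ⊥ 1, n`. Therefore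
`im C = S sin α n + (1 - q²) M`, an orthogonal sum, and `‖1 - q²‖² = 2 - 2 cos α`.
-/

theorem inner_integral_eq_zero {X E : Type*} [MeasurableSpace X] {μ : Measure X}
    [NormedAddCommGroup E] [InnerProductSpace ℝ E] [CompleteSpace E] {f : X → E}
    (hf : Integrable f μ) (c : E) (h : ∀ x, inner ℝ (f x) c = 0) : inner ℝ (∫ x, f x ∂μ) c = 0 := by
  have h' : ∀ x, inner ℝ c (f x) = 0 := fun x => by rw [real_inner_comm]; exact h x
  rw [real_inner_comm, ← integral_inner hf]
  simp [h']

namespace Quaternion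

theorem coe_eq_smul_one (r : ℝ) : (r : ℍ[ℝ]) = r • 1 := by rw [← coe_mul_eq_smul, mul_one]

theorem mul_self_of_re_eq_zero {x : ℍ[ℝ]} (hx : x.re = 0) :
    x * x = -((‖x‖ ^ 2 : ℝ) : ℍ[ℝ]) := by
  rw [← sq, sq_eq_neg_normSq.mpr hx, normSq_eq_norm_mul_self, sq]

theorem re_mul_eq_neg_inner {x y : ℍ[ℝ]} (hy : y.re = 0) : (x * y).re = -inner ℝ x y := by
  rw [inner_def, star_eq_neg.mpr hy, mul_neg, re_neg, neg_neg]

theorem mul_add_mul_of_re_eq_zero {x y : ℍ[ℝ]} (hx : x.re = 0) (hy : y.re = 0) :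
    x * y + y * x = -((2 * inner ℝ x y : ℝ) : ℍ[ℝ]) := by
  ext <;> simp [inner_def, hx, hy] <;> ring

theorem im_of_re_eq_zero {x : ℍ[ℝ]} (hx : x.re = 0) : x.im = x := by
  rw [← sub_re_self, hx, coe_zero, sub_zero]

theorem inner_one_right (x : ℍ[ℝ]) : inner ℝ x 1 = x.re := by
  rw [inner_def, star_one, mul_one]

theorem inner_mul_mul_right (x y z : ℍ[ℝ]) :
    inner ℝ (x * z) (y * z) = ‖z‖ ^ 2 * inner ℝ x y := by
  rw [inner_def, inner_def, star_mul, mul_assoc, ← mul_assoc z, self_mul_star,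
    coe_mul_eq_smul, mul_smul_comm, re_smul, normSq_eq_norm_mul_self, sq, smul_eq_mul]

theorem star_conj_add_mul_add {q a b : ℍ[ℝ]} (hq : q * star q = 1)
    (hqa : a * star q = q * a) (hqb : Commute q b) (ha : a.re = 0) (hb : b.re = 0)
    (hba : b * a = -(a * b)) :
    star (q * (a + b) * star q) * (a + b) =
      ‖a‖ ^ 2 • (q * q) + ((‖b‖ ^ 2 : ℝ) : ℍ[ℝ]) + (1 - q * q) * (a * b) := by
  have hconj : q * (a + b) * star q = q * q * a + b := by
    rw [mul_add, add_mul, mul_assoc q a, hqa, hqb.eq, mul_assoc b, hq, mul_one, ← mul_assoc]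
  have hstar : star (q * (a + b) * star q) = -(q * (a + b) * star q) := by
    rw [star_mul, star_mul, star_star, star_add, star_eq_neg.mpr ha, star_eq_neg.mpr hb,
      ← neg_add, neg_mul, mul_neg, ← mul_assoc]
  rw [hstar, hconj]
  calc -(q * q * a + b) * (a + b) = -(q * q) * (a * a) - q * q * (a * b) - b * a - b * b := by
        noncomm_ring
    _ = _ := by
        rw [mul_self_of_re_eq_zero ha, mul_self_of_re_eq_zero hb, hba, mul_neg, mul_coe_eq_smul,
          sub_mul, one_mul]
        module

section UnitAxis

variable {n : ℍ[ℝ]}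

theorem mul_self_eq_neg_one (hn_re : n.re = 0) (hn : ‖n‖ = 1) : n * n = -1 := by
  rw [mul_self_of_re_eq_zero hn_re, hn, one_pow, coe_one]

theorem exp_smul_eq_cos_add_sin_smul (hn_re : n.re = 0) (hn : ‖n‖ = 1) (t : ℝ) :
    NormedSpace.exp (t • n) = (Real.cos t : ℍ[ℝ]) + Real.sin t • n := by
  rw [exp_of_re_eq_zero _ (by simp [hn_re]), norm_smul, hn, mul_one, Real.norm_eq_abs,
    Real.cos_abs, smul_smul]
  obtain rfl | ht := eq_or_ne t 0
  · simp
  rcases abs_choice t with h | h <;> simp only [h, Real.sin_neg] <;> field_simp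

theorem exp_smul_mul_exp_smul (hn_re : n.re = 0) (hn : ‖n‖ = 1) (t u : ℝ) :
    NormedSpace.exp (t • n) * NormedSpace.exp (u • n) = NormedSpace.exp ((t + u) • n) := by
  simp only [exp_smul_eq_cos_add_sin_smul hn_re hn, coe_eq_smul_one, add_mul, mul_add,
    smul_mul_smul_comm, one_mul, mul_one, mul_self_eq_neg_one hn_re hn, Real.cos_add,
    Real.sin_add]
  module

theorem star_exp_smul (hn_re : n.re = 0) (hn : ‖n‖ = 1) (t : ℝ) :
    star (NormedSpace.exp (t • n)) = NormedSpace.exp ((-t) • n) := by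
  simp only [exp_smul_eq_cos_add_sin_smul hn_re hn]
  rw [star_add, star_coe, star_smul, star_eq_neg.mpr hn_re, Real.cos_neg, Real.sin_neg, neg_smul,
    smul_neg]

theorem mul_exp_smul_of_anticommute {a : ℍ[ℝ]} (hn_re : n.re = 0) (hn : ‖n‖ = 1)
    (hna : n * a = -(a * n)) (t : ℝ) :
    a * NormedSpace.exp (t • n) = NormedSpace.exp ((-t) • n) * a := by
  simp only [exp_smul_eq_cos_add_sin_smul hn_re hn]
  rw [mul_add, add_mul, mul_smul_comm, smul_mul_assoc, hna, coe_commutes, Real.cos_neg,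
    Real.sin_neg, neg_smul, smul_neg, neg_neg]

theorem re_sub_inner_smul_eq_zero {w : ℍ[ℝ]} (hn_re : n.re = 0) (hw : w.re = 0) :
    (w - inner ℝ w n • n).re = 0 := by
  simp [hn_re, hw]

theorem inner_sub_inner_smul_self (hn : ‖n‖ = 1) (w : ℍ[ℝ]) :
    inner ℝ (w - inner ℝ w n • n) n = 0 := by
  rw [inner_sub_left, real_inner_smul_left, real_inner_self_eq_norm_sq, hn]
  ring

theorem norm_sq_sub_inner_smul_add (hn : ‖n‖ = 1) (w : ℍ[ℝ]) :
    ‖w - inner ℝ w n • n‖ ^ 2 + ‖inner ℝ w n • n‖ ^ 2 = ‖w‖ ^ 2 := by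
  have h := norm_add_sq_real (w - inner ℝ w n • n) (inner ℝ w n • n)
  rw [sub_add_cancel, real_inner_smul_right, inner_sub_inner_smul_self hn] at h
  linarith

theorem anticommute_of_inner_eq_zero {a : ℍ[ℝ]} (hn_re : n.re = 0) (ha_re : a.re = 0)
    (ha : inner ℝ a n = 0) : n * a = -(a * n) := by
  rw [eq_neg_iff_add_eq_zero, add_comm, mul_add_mul_of_re_eq_zero ha_re hn_re, ha]
  simp

theorem re_mul_smul_eq_zero {a : ℍ[ℝ]} (hn_re : n.re = 0) (ha : inner ℝ a n = 0) (β : ℝ) :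
    (a * (β • n)).re = 0 := by
  rw [mul_smul_comm, re_smul, re_mul_eq_neg_inner hn_re, ha, neg_zero, smul_zero]

theorem inner_mul_smul_self_eq_zero {a : ℍ[ℝ]} (ha_re : a.re = 0) (β : ℝ) :
    inner ℝ (a * (β • n)) n = 0 := by
  have h := inner_mul_mul_right a 1 n
  rw [one_mul, inner_one_right, ha_re, mul_zero] at h
  rw [mul_smul_comm, real_inner_smul_left, h, mul_zero]

theorem star_conj_exp_smul_mul_self {w : ℍ[ℝ]} (hn_re : n.re = 0) (hn : ‖n‖ = 1)
    (hw : w.re = 0) (α : ℝ) :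
    star (NormedSpace.exp ((α / 2) • n) * w * star (NormedSpace.exp ((α / 2) • n))) * w =
      ‖w - inner ℝ w n • n‖ ^ 2 • NormedSpace.exp (α • n)
        + ((‖inner ℝ w n • n‖ ^ 2 : ℝ) : ℍ[ℝ])
        + (1 - NormedSpace.exp (α • n))
          * ((w - inner ℝ w n • n) * (inner ℝ w n • n)) := by
  set q := NormedSpace.exp ((α / 2) • n)
  set β := inner ℝ w n
  have ha_re : (w - β • n).re = 0 := re_sub_inner_smul_eq_zero hn_re hw
  have hna : n * (w - β • n) = -((w - β • n) * n) :=
    anticommute_of_inner_eq_zero hn_re ha_re (inner_sub_inner_smul_self hn w)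
  have hq : q * star q = 1 := by
    rw [star_exp_smul hn_re hn, exp_smul_mul_exp_smul hn_re hn, add_neg_cancel, zero_smul,
      NormedSpace.exp_zero]
  have hqa : (w - β • n) * star q = q * (w - β • n) := by
    rw [star_exp_smul hn_re hn, mul_exp_smul_of_anticommute hn_re hn hna, neg_neg]
  have hqb : Commute q (β • n) := ((Commute.refl n).smul_left _).exp_left.smul_right β
  have hba : β • n * (w - β • n) = -((w - β • n) * (β • n)) := by
    rw [smul_mul_assoc, hna, mul_smul_comm, smul_neg]
  have hqq : q * q = NormedSpace.exp (α • n) := by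
    rw [exp_smul_mul_exp_smul hn_re hn, add_halves]
  have h := star_conj_add_mul_add hq hqa hqb ha_re (by simp [hn_re]) hba
  rwa [sub_add_cancel, hqq] at h

theorem one_sub_exp_smul (hn_re : n.re = 0) (hn : ‖n‖ = 1) (α : ℝ) :
    1 - NormedSpace.exp (α • n) = ((1 - Real.cos α : ℝ) : ℍ[ℝ]) - Real.sin α • n := by
  rw [exp_smul_eq_cos_add_sin_smul hn_re hn]
  push_cast
  abel

theorem norm_one_sub_exp_smul_sq (hn_re : n.re = 0) (hn : ‖n‖ = 1) (α : ℝ) :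
    ‖1 - NormedSpace.exp (α • n)‖ ^ 2 = 2 - 2 * Real.cos α := by
  have horth : inner ℝ ((1 - Real.cos α : ℝ) : ℍ[ℝ]) (Real.sin α • n) = 0 := by
    simp [inner_def, star_eq_neg.mpr hn_re, hn_re]
  rw [one_sub_exp_smul hn_re hn, norm_sub_sq_real, horth, norm_smul, norm_coe, hn,
    Real.norm_eq_abs, Real.norm_eq_abs, mul_one, sq_abs, sq_abs]
  nlinarith [Real.sin_sq_add_cos_sq α]

theorem norm_im_smul_exp_add_coe_add_mul_sq (hn_re : n.re = 0) (hn : ‖n‖ = 1) {M : ℍ[ℝ]}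
    (hM_re : M.re = 0) (hMn : inner ℝ M n = 0) (S T α : ℝ) :
    ‖(S • NormedSpace.exp (α • n) + (T : ℍ[ℝ])
        + (1 - NormedSpace.exp (α • n)) * M).im‖ ^ 2 =
      Real.sin α ^ 2 * S ^ 2 + (2 - 2 * Real.cos α) * ‖M‖ ^ 2 := by
  have hnM : n * M = -(M * n) := anticommute_of_inner_eq_zero hn_re hM_re hMn
  have hre : ((1 - NormedSpace.exp (α • n)) * M).re = 0 := by
    rw [one_sub_exp_smul hn_re hn, sub_mul, smul_mul_assoc, re_sub, re_smul, coe_mul_eq_smul,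
      re_smul, hM_re, re_mul_eq_neg_inner hM_re, real_inner_comm, hMn]
    simp
  have him : (S • NormedSpace.exp (α • n) + (T : ℍ[ℝ])
        + (1 - NormedSpace.exp (α • n)) * M).im
      = (S * Real.sin α) • n + (1 - NormedSpace.exp (α • n)) * M := by
    have hE : (NormedSpace.exp (α • n)).im = Real.sin α • n := by
      rw [exp_smul_eq_cos_add_sin_smul hn_re hn, im_add, im_coe, im_smul, im_of_re_eq_zero hn_re,
        zero_add]
    rw [im_add, im_add, im_smul, hE, im_coe, im_of_re_eq_zero hre, add_zero, smul_smul]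
  have horth : inner ℝ ((S * Real.sin α) • n) ((1 - NormedSpace.exp (α • n)) * M) = 0 := by
    have h := inner_mul_mul_right 1 M n
    rw [one_mul, real_inner_comm M 1, inner_one_right, hM_re, mul_zero] at h
    rw [real_inner_smul_left, one_sub_exp_smul hn_re hn, sub_mul, smul_mul_assoc, hnM,
      coe_mul_eq_smul, inner_sub_right, real_inner_smul_right, real_inner_smul_right,
      inner_neg_right, h, real_inner_comm, hMn]
    ring
  rw [him, norm_add_sq_real, horth, norm_mul, mul_pow, norm_one_sub_exp_smul_sq hn_re hn,
    norm_smul, hn, mul_one, Real.norm_eq_abs, sq_abs]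
  ring

end UnitAxis

section Integral

variable {X : Type*} [MeasurableSpace X] {μ : Measure X}

theorem re_integral_eq_zero {f : X → ℍ[ℝ]} (hf : Integrable f μ)
    (h : ∀ x, (f x).re = 0) : (∫ x, f x ∂μ).re = 0 := by
  rw [← inner_one_right]
  exact inner_integral_eq_zero hf 1 fun x => (inner_one_right _).trans (h x)

theorem integral_smul_add_coe_add_mul {f g : X → ℝ} {h : X → ℍ[ℝ]}
    (hf : Integrable f μ) (hg : Integrable g μ) (hh : Integrable h μ) (p r : ℍ[ℝ]) :
    ∫ x, (f x • p + (g x : ℍ[ℝ]) + r * h x) ∂μ =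
      (∫ x, f x ∂μ) • p + ((∫ x, g x ∂μ : ℝ) : ℍ[ℝ]) + r * ∫ x, h x ∂μ := by
  simp only [coe_eq_smul_one]
  have hfg : Integrable (fun x => f x • p + g x • (1 : ℍ[ℝ])) μ :=
    (hf.smul_const p).add (hg.smul_const 1)
  rw [integral_add hfg (hh.const_mul r),
    integral_add (hf.smul_const p) (hg.smul_const 1), integral_smul_const, integral_smul_const,
    integral_const_mul_of_integrable hh]

theorem integrable_plane_axis_terms {v : X → ℍ[ℝ]} (hv : AEStronglyMeasurable v μ)
    (hsq : Integrable (fun x => ‖v x‖ ^ 2) μ) {n : ℍ[ℝ]} (hn : ‖n‖ = 1) :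
    Integrable (fun x => ‖v x - inner ℝ (v x) n • n‖ ^ 2) μ ∧
      Integrable (fun x => ‖inner ℝ (v x) n • n‖ ^ 2) μ ∧
      Integrable (fun x => (v x - inner ℝ (v x) n • n) * (inner ℝ (v x) n • n)) μ := by
  have hb : AEStronglyMeasurable (fun x => inner ℝ (v x) n • n) μ :=
    (hv.inner aestronglyMeasurable_const).smul_const n
  have ha : AEStronglyMeasurable (fun x => v x - inner ℝ (v x) n • n) μ := hv.sub hb
  have hpyth := fun x => norm_sq_sub_inner_smul_add hn (v x)
  refine ⟨hsq.mono' (ha.norm.pow 2) (ae_of_all _ fun x => ?_),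
    hsq.mono' (hb.norm.pow 2) (ae_of_all _ fun x => ?_),
    hsq.mono' (ha.mul hb) (ae_of_all _ fun x => ?_)⟩
  · rw [Real.norm_of_nonneg (by positivity)]
    linarith [hpyth x, sq_nonneg ‖inner ℝ (v x) n • n‖]
  · rw [Real.norm_of_nonneg (by positivity)]
    linarith [hpyth x, sq_nonneg ‖v x - inner ℝ (v x) n • n‖]
  · rw [norm_mul]
    nlinarith [hpyth x,
      sq_nonneg (‖v x - inner ℝ (v x) n • n‖ - ‖inner ℝ (v x) n • n‖)]

end Integral

end Quaternion

theorem correlation_bivector_part_norm_sq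
    {m : ℕ} (v : EuclideanSpace ℝ (Fin m) → ℍ[ℝ])
    (hmeas : Measurable v)
    (hre : ∀ x, (v x).re = 0)
    (hsq : Integrable (fun x => ‖v x‖ ^ 2))
    (n : ℍ[ℝ]) (hn_re : n.re = 0) (hn_norm : ‖n‖ = 1)
    (α : ℝ) :
    ‖(∫ x, star (NormedSpace.exp ((α / 2) • n) * v x
          * star (NormedSpace.exp ((α / 2) • n))) * v x).im‖ ^ 2 =
      (Real.sin α) ^ 2 * (∫ x, ‖v x - (inner ℝ (v x) n : ℝ) • n‖ ^ 2) ^ 2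
        + (2 - 2 * Real.cos α)
            * ‖∫ x, (v x - (inner ℝ (v x) n : ℝ) • n) * ((inner ℝ (v x) n : ℝ) • n)‖ ^ 2 := by
  obtain ⟨ha, hb, hab⟩ := integrable_plane_axis_terms hmeas.aestronglyMeasurable hsq hn_norm
  have hM_re := re_integral_eq_zero hab fun x =>
    re_mul_smul_eq_zero hn_re (inner_sub_inner_smul_self hn_norm (v x)) _
  have hMn := inner_integral_eq_zero hab n fun x =>
    inner_mul_smul_self_eq_zero (re_sub_inner_smul_eq_zero hn_re (hre x)) _
  simp only [star_conj_exp_smul_mul_self hn_re hn_norm (hre _) α]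
  rw [integral_smul_add_coe_add_mul ha hb hab]
  exact norm_im_smul_exp_add_coe_add_mul_sq hn_re hn_norm hM_re hMn _ _ α
end

section
/- Let v : ℝ^m → ℍ be a measurable vector field (re (v x) = 0 for all x) with ∫ ‖v x‖² dx = 1, n a purely imaginary unit quaternion, α ∈ [0, π], q = exp((α/2) • n), C = ∫ star (q * v x * star q) * v x dx, and assume im C ≠ 0. Set φ = Real.arccos (re C / ‖C‖), m = ‖im C‖⁻¹ • im C, and let p = Real.cos (φ/2) + Real.sin (φ/2) • m be the half-angle correction rotor. Then the real part of the composed rotor r = star p * q satisfies re r = Real.cos (α/2) * Real.cos (φ/2) + Real.sin (α/2) * Real.sin (φ/2) * Real.sin α * (∫ ‖v∥ x‖² dx) / ‖im C‖, where v∥ x = v x − ⟪v x, n⟫ • n. -/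
/-! With `q = cos (α/2) + sin (α/2) • n` and `re (star p * q) = ⟪p, q⟫`, the claim reduces to
`⟪im C, n⟫ = sin α * ∫ ‖v∥‖²`. Pointwise this is a polynomial identity for a unit axis `n`:
the rotation fixes `v⊥` and turns `v∥` by `α` in the plane, so the axis component of
`star (q w q⋆) w` is `sin α * ‖w∥‖²`; integrating gives the identity. If the integrand is not
integrable, then `C = 0`, and both sides collapse to `cos (α/2) cos (φ/2)` since `‖im C‖⁻¹ = 0`. -/

open Quaternion MeasureTheory

open scoped RealInnerProductSpace

namespace Quaternion

theorem exp_smul_of_re_eq_zero {n : ℍ[ℝ]} (hn : n.re = 0) (hn1 : ‖n‖ = 1) (t : ℝ) :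
    NormedSpace.exp (t • n) = ↑(Real.cos t) + Real.sin t • n := by
  rw [exp_of_re_eq_zero _ (by simp [hn]), norm_smul, hn1, mul_one, Real.norm_eq_abs,
    Real.cos_abs, smul_smul]
  rcases eq_or_ne t 0 with rfl | ht
  · simp
  · rcases abs_choice t with h | h <;> rw [h]
    · field_simp
    · rw [Real.sin_neg]
      field_simp

theorem re_star_mul (p q : ℍ[ℝ]) : (star p * q).re = ⟪p, q⟫ := by
  simp only [inner_def, re_mul, re_star, imI_star, imJ_star, imK_star]
  ring

theorem inner_coe_add_smul_coe_add_smul {u n : ℍ[ℝ]} (hu : u.re = 0) (hn : n.re = 0)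
    (a b c s : ℝ) : ⟪(a : ℍ[ℝ]) + b • u, (c : ℍ[ℝ]) + s • n⟫ = a * c + b * s * ⟪u, n⟫ := by
  simp only [inner_def, re_mul, re_add, imI_add, imJ_add, imK_add, re_star, imI_star, imJ_star,
    imK_star, re_coe, imI_coe, imJ_coe, imK_coe, re_smul, imI_smul, imJ_smul, imK_smul,
    smul_eq_mul, hu, hn]
  ring

theorem inner_im_left {n : ℍ[ℝ]} (hn : n.re = 0) (a : ℍ[ℝ]) : ⟪a.im, n⟫ = ⟪a, n⟫ := by
  simp only [inner_def, re_mul, re_star, imI_star, imJ_star, imK_star, re_im, imI_im, imJ_im,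
    imK_im, hn]
  ring

theorem imI_sq_add_imJ_sq_add_imK_sq {n : ℍ[ℝ]} (hn : n.re = 0) (hn1 : ‖n‖ = 1) :
    n.imI ^ 2 + n.imJ ^ 2 + n.imK ^ 2 = 1 := by
  have h := normSq_def' n
  rw [normSq_eq_norm_mul_self, hn1, hn] at h
  linarith

theorem inner_star_conj_mul_self {n w : ℍ[ℝ]} (hn : n.re = 0) (hn1 : ‖n‖ = 1) (hw : w.re = 0)
    (c s : ℝ) :
    ⟪star ((c + s • n) * w * star (c + s • n)) * w, n⟫ = 2 * s * c * ‖w - ⟪w, n⟫ • n‖ ^ 2 := by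
  have hn_sq := imI_sq_add_imJ_sq_add_imK_sq hn hn1
  rw [← real_inner_self_eq_norm_sq]
  simp only [inner_def, re_mul, imI_mul, imJ_mul, imK_mul, re_add, imI_add, imJ_add, imK_add,
    re_sub, imI_sub, imJ_sub, imK_sub, re_star, imI_star, imJ_star, imK_star,
    re_coe, imI_coe, imJ_coe, imK_coe, re_smul, imI_smul, imJ_smul, imK_smul,
    smul_eq_mul, hn, hw]
  linear_combination (-2 * c * s * ((n.imI * w.imI + n.imJ * w.imJ + n.imK * w.imK) ^ 2
    - (w.imI ^ 2 + w.imJ ^ 2 + w.imK ^ 2))) * hn_sq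

end Quaternion

theorem inner_integral_star_conj_mul_self {X : Type*} [MeasurableSpace X] {μ : Measure X}
    {v : X → ℍ[ℝ]} (hv : ∀ x, (v x).re = 0) {n : ℍ[ℝ]} (hn : n.re = 0) (hn1 : ‖n‖ = 1)
    (c s : ℝ) (hf : Integrable (fun x => star ((c + s • n) * v x * star (c + s • n)) * v x) μ) :
    ⟪∫ x, star ((c + s • n) * v x * star (c + s • n)) * v x ∂μ, n⟫
      = 2 * s * c * ∫ x, ‖v x - ⟪v x, n⟫ • n‖ ^ 2 ∂μ := by
  rw [real_inner_comm, ← integral_inner hf, ← integral_const_mul]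
  refine integral_congr_ae (.of_forall fun x => ?_)
  exact (real_inner_comm _ _).trans (inner_star_conj_mul_self hn hn1 (hv x) c s)

theorem composed_rotor_scalar_part_general
    {m : ℕ} (v : EuclideanSpace ℝ (Fin m) → ℍ[ℝ])
    (hre : ∀ x, (v x).re = 0)
    (n : ℍ[ℝ]) (hn_re : n.re = 0) (hn_norm : ‖n‖ = 1)
    (α : ℝ)
    (q C : ℍ[ℝ])
    (hq : q = NormedSpace.exp ((α / 2) • n))
    (hC : C = ∫ x, star (q * v x * star q) * v x)
    (φ : ℝ)
    (p : ℍ[ℝ])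
    (hp : p = ((Real.cos (φ / 2) : ℝ) : ℍ[ℝ])
        + Real.sin (φ / 2) • (‖C.im‖⁻¹ • C.im)) :
    (star p * q).re =
      Real.cos (α / 2) * Real.cos (φ / 2)
        + Real.sin (α / 2) * Real.sin (φ / 2) * Real.sin α
            * (∫ x, ‖v x - (inner ℝ (v x) n : ℝ) • n‖ ^ 2) / ‖C.im‖ := by
  rw [exp_smul_of_re_eq_zero hn_re hn_norm] at hq
  have hsin : Real.sin α = 2 * Real.sin (α / 2) * Real.cos (α / 2) := by
    rw [← Real.sin_two_mul, mul_div_cancel₀ α two_ne_zero]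
  have hCn : ‖C.im‖⁻¹ * ⟪C.im, n⟫ = ‖C.im‖⁻¹ * (Real.sin α * ∫ x, ‖v x - ⟪v x, n⟫ • n‖ ^ 2) := by
    by_cases hf : Integrable fun x => star (q * v x * star q) * v x
    · rw [inner_im_left hn_re, hC, hsin]
      subst hq
      rw [inner_integral_star_conj_mul_self hre hn_re hn_norm _ _ hf]
    · rw [hC, integral_undef hf]
      simp
  rw [hp, hq, re_star_mul, inner_coe_add_smul_coe_add_smul (by simp [re_smul]) hn_re,
    real_inner_smul_left]
  linear_combination Real.sin (φ / 2) * Real.sin (α / 2) * hCn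

theorem composed_rotor_scalar_part
    {m : ℕ} (v : EuclideanSpace ℝ (Fin m) → ℍ[ℝ])
    (hmeas : Measurable v)
    (hre : ∀ x, (v x).re = 0)
    (hnorm : ∫ x, ‖v x‖ ^ 2 = 1)
    (n : ℍ[ℝ]) (hn_re : n.re = 0) (hn_norm : ‖n‖ = 1)
    (α : ℝ) (hα0 : 0 ≤ α) (hαπ : α ≤ Real.pi)
    (q C : ℍ[ℝ])
    (hq : q = NormedSpace.exp ((α / 2) • n))
    (hC : C = ∫ x, star (q * v x * star q) * v x)
    (him : C.im ≠ 0)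
    (φ : ℝ) (hφ : φ = Real.arccos (C.re / ‖C‖))
    (p : ℍ[ℝ])
    (hp : p = ((Real.cos (φ / 2) : ℝ) : ℍ[ℝ])
        + Real.sin (φ / 2) • (‖C.im‖⁻¹ • C.im)) :
    (star p * q).re =
      Real.cos (α / 2) * Real.cos (φ / 2)
        + Real.sin (α / 2) * Real.sin (φ / 2) * Real.sin α
            * (∫ x, ‖v x - (inner ℝ (v x) n : ℝ) • n‖ ^ 2) / ‖C.im‖ :=
  composed_rotor_scalar_part_general v hre n hn_re hn_norm α q C hq hC φ p hp
end

section
/- (Lemma 1 of the paper.) Let v : ℝ^m → ℍ be a measurable vector field (re (v x) = 0 for all x) with ∫ ‖v x‖² dx = 1, n a purely imaginary unit quaternion, α ∈ [0, π), q = exp((α/2) • n), and C = ∫ star (q * v x * star q) * v x dx. Set φ = Real.arccos (re C / ‖C‖) and let p = Real.cos (φ/2) + Real.sin (φ/2) • (‖im C‖⁻¹ • im C) if im C ≠ 0, and p = 1 if im C = 0. Then re (star p * q) ≥ Real.cos (α/2); equivalently the composed rotation angle β = 2 * Real.arccos (re (star p * q)) satisfies β ≤ α. That is, applying the outer rotation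 encoded in the normalized geometric cross correlation to the rotated copy of v never increases the rotational misalignment. -/
/-!
The integrand has `⟪star (q * w * star q) * w, q⟫ = ‖q‖ ^ 2 * q.re * ‖w‖ ^ 2`, by cyclicity of the
real part, so the correlation satisfies `⟪C, q⟫ = q.re = cos (α / 2)` and `‖C‖ ≤ 1`. The
half-angle rotor is `p = (1 + C / ‖C‖) / (2 * cos (φ / 2))`, hence
`⟪p, q⟫ = q.re * (1 + ‖C‖⁻¹) / (2 * cos (φ / 2)) ≥ q.re`, since `2 * cos (φ / 2) ≤ 2 ≤ 1 + ‖C‖⁻¹`;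
finally `(star p * q).re = ⟪p, q⟫`.
-/

open Quaternion MeasureTheory

open scoped InnerProductSpace

namespace Quaternion

theorem re_mul_comm {R : Type*} [CommRing R] (a b : ℍ[R]) : (a * b).re = (b * a).re := by
  simp only [re_mul]; ring

theorem re_star_mul_eq_inner (a b : ℍ[ℝ]) : (star a * b).re = ⟪a, b⟫_ℝ := by
  rw [inner_def, re_mul_comm, ← re_star, star_mul, star_star]

theorem inner_star_conj_mul_self_s9 (q w : ℍ[ℝ]) :
    ⟪star (q * w * star q) * w, q⟫_ℝ = ‖q‖ ^ 2 * q.re * ‖w‖ ^ 2 := by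
  calc ⟪star (q * w * star q) * w, q⟫_ℝ
      = (star q * q * (star w * (star q * w))).re := by
        rw [inner_def, re_mul_comm]; simp only [star_mul, star_star, mul_assoc]
    _ = normSq q * (star q * (w * star w)).re := by
        rw [star_mul_self, coe_mul_eq_smul, re_smul, smul_eq_mul, re_mul_comm, mul_assoc]
    _ = ‖q‖ ^ 2 * q.re * ‖w‖ ^ 2 := by
        rw [self_mul_star, mul_coe_eq_smul, re_smul, re_star, smul_eq_mul,
          normSq_eq_norm_mul_self, normSq_eq_norm_mul_self]
        ring

theorem norm_star_conj_mul_self (q w : ℍ[ℝ]) :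
    ‖star (q * w * star q) * w‖ = ‖q‖ ^ 2 * ‖w‖ ^ 2 := by
  simp only [norm_mul, norm_star]; ring

theorem norm_exp_of_re_eq_zero {x : ℍ[ℝ]} (hx : x.re = 0) : ‖NormedSpace.exp x‖ = 1 := by
  simp [hx]

theorem re_exp_smul_of_norm_eq_one {n : ℍ[ℝ]} (hn_re : n.re = 0) (hn : ‖n‖ = 1) (t : ℝ) :
    (NormedSpace.exp (t • n)).re = Real.cos t := by
  simp [re_exp, hn_re, norm_smul, hn]

theorem inner_integral_star_conj_mul_self {X : Type*} [MeasurableSpace X] {μ : Measure X}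
    {v : X → ℍ[ℝ]} {q : ℍ[ℝ]} (hint : Integrable (fun x => star (q * v x * star q) * v x) μ) :
    ⟪∫ x, star (q * v x * star q) * v x ∂μ, q⟫_ℝ = ‖q‖ ^ 2 * q.re * ∫ x, ‖v x‖ ^ 2 ∂μ := by
  rw [real_inner_comm, ← integral_inner hint, ← integral_const_mul]
  congr 1 with x
  rw [real_inner_comm, inner_star_conj_mul_self_s9]

theorem norm_integral_star_conj_mul_self_le {X : Type*} [MeasurableSpace X] {μ : Measure X}
    (v : X → ℍ[ℝ]) (q : ℍ[ℝ]) :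
    ‖∫ x, star (q * v x * star q) * v x ∂μ‖ ≤ ‖q‖ ^ 2 * ∫ x, ‖v x‖ ^ 2 ∂μ := by
  refine (norm_integral_le_integral_norm _).trans_eq ?_
  simp_rw [norm_star_conj_mul_self, integral_const_mul]

/-- The principal square root of the unit quaternion `C / ‖C‖`. -/
noncomputable def halfAngleRotor (C : ℍ[ℝ]) : ℍ[ℝ] :=
  let φ := Real.arccos (C.re / ‖C‖)
  (Real.cos (φ / 2) : ℍ[ℝ]) + Real.sin (φ / 2) • (‖C.im‖⁻¹ • C.im)

theorem sq_norm_eq_sq_re_add_sq_norm_im (C : ℍ[ℝ]) : ‖C‖ ^ 2 = C.re ^ 2 + ‖C.im‖ ^ 2 := by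
  simp only [sq, ← normSq_eq_norm_mul_self, normSq_def', re_im, imI_im, imJ_im, imK_im]
  ring

theorem cos_arccos_re_div_norm (C : ℍ[ℝ]) :
    Real.cos (Real.arccos (C.re / ‖C‖)) = C.re / ‖C‖ := by
  have hre : |C.re| ≤ ‖C‖ :=
    abs_le_of_sq_le_sq (by nlinarith [sq_norm_eq_sq_re_add_sq_norm_im C]) (norm_nonneg C)
  have h : |C.re / ‖C‖| ≤ 1 := by
    rw [abs_div, abs_norm]
    exact div_le_one_of_le₀ hre (norm_nonneg C)
  exact Real.cos_arccos (abs_le.mp h).1 (abs_le.mp h).2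

theorem sin_arccos_re_div_norm {C : ℍ[ℝ]} (hC : C ≠ 0) :
    Real.sin (Real.arccos (C.re / ‖C‖)) = ‖C.im‖ / ‖C‖ := by
  have hN : ‖C‖ ≠ 0 := norm_ne_zero_iff.mpr hC
  have h : 1 - (C.re / ‖C‖) ^ 2 = (‖C.im‖ / ‖C‖) ^ 2 := by
    field_simp
    linear_combination sq_norm_eq_sq_re_add_sq_norm_im C
  rw [Real.sin_arccos, h, Real.sqrt_sq (by positivity)]

theorem two_cos_smul_halfAngleRotor {C : ℍ[ℝ]} (hCim : C.im ≠ 0) :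
    (2 * Real.cos (Real.arccos (C.re / ‖C‖) / 2)) • halfAngleRotor C = 1 + ‖C‖⁻¹ • C := by
  have hK : ‖C.im‖ ≠ 0 := norm_ne_zero_iff.mpr hCim
  have hC0 : C ≠ 0 := fun h => hCim (by simp [h])
  have hN : ‖C‖ ≠ 0 := norm_ne_zero_iff.mpr hC0
  set φ := Real.arccos (C.re / ‖C‖) with hφ
  have hcos : 2 * Real.cos (φ / 2) * Real.cos (φ / 2) = 1 + C.re / ‖C‖ := by
    have h := Real.cos_sq (φ / 2)
    rw [mul_div_cancel₀ φ two_ne_zero, hφ, cos_arccos_re_div_norm] at h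
    linear_combination 2 * h
  have hsin : 2 * Real.cos (φ / 2) * Real.sin (φ / 2) = ‖C.im‖ / ‖C‖ := by
    have h := Real.sin_two_mul (φ / 2)
    rw [mul_div_cancel₀ φ two_ne_zero, hφ, sin_arccos_re_div_norm hC0] at h
    linear_combination -h
  ext <;> simp only [halfAngleRotor, ← hφ, smul_add, smul_eq_mul, re_add, re_smul, re_coe, re_im,
    re_one, imI_add, imI_smul, imI_coe, imI_im, imI_one, imJ_add, imJ_smul, imJ_coe, imJ_im,
    imJ_one, imK_add, imK_smul, imK_coe, imK_im, imK_one, mul_zero, add_zero, zero_add]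
  · rw [hcos, div_eq_inv_mul]
  all_goals rw [← mul_assoc, ← mul_assoc, hsin]; field_simp

theorem re_le_inner_halfAngleRotor {C q : ℍ[ℝ]} (hq : 0 ≤ q.re) (hCq : ⟪C, q⟫_ℝ = q.re)
    (hC1 : ‖C‖ ≤ 1) (hCim : C.im ≠ 0) : q.re ≤ ⟪halfAngleRotor C, q⟫_ℝ := by
  set φ := Real.arccos (C.re / ‖C‖)
  have hsmul := two_cos_smul_halfAngleRotor hCim
  have hN : 0 < ‖C‖ := norm_pos_iff.mpr fun h => hCim (by simp [h])
  have hcos_pos : 0 < Real.cos (φ / 2) := by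
    refine (Real.cos_nonneg_of_mem_Icc ⟨?_, ?_⟩).lt_of_ne fun h => hCim ?_
    · linarith [Real.arccos_nonneg (C.re / ‖C‖), Real.pi_pos]
    · linarith [Real.arccos_le_pi (C.re / ‖C‖)]
    · -- `cos (φ / 2) = 0` would make `1 + ‖C‖⁻¹ • C` vanish, so `C` would be real
      have him := congr_arg Quaternion.im hsmul
      rw [← h] at him
      simpa [hN.ne'] using him.symm
  have hinner : 2 * Real.cos (φ / 2) * ⟪halfAngleRotor C, q⟫_ℝ = (1 + ‖C‖⁻¹) * q.re := by
    rw [← real_inner_smul_left, hsmul, inner_add_left, real_inner_smul_left, hCq, inner_def,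
      one_mul, re_star]
    ring
  have hcos_le : 2 * Real.cos (φ / 2) ≤ 1 + ‖C‖⁻¹ := by
    linarith [Real.cos_le_one (φ / 2), one_le_inv_iff₀.mpr ⟨hN, hC1⟩]
  refine le_of_mul_le_mul_left ?_ (by positivity : 0 < 2 * Real.cos (φ / 2))
  rw [hinner]
  exact mul_le_mul_of_nonneg_right hcos_le hq

end Quaternion

theorem correlation_rotor_does_not_increase_misalignment_general
    {m : ℕ} (v : EuclideanSpace ℝ (Fin m) → ℍ[ℝ])
    (hnorm : ∫ x, ‖v x‖ ^ 2 = 1)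
    (n : ℍ[ℝ]) (hn_re : n.re = 0) (hn_norm : ‖n‖ = 1)
    (α : ℝ) (hα0 : 0 ≤ α) (hαπ : α < Real.pi)
    (q C : ℍ[ℝ])
    (hq : q = NormedSpace.exp ((α / 2) • n))
    (hC : C = ∫ x, star (q * v x * star q) * v x)
    (φ : ℝ) (hφ : φ = Real.arccos (C.re / ‖C‖))
    (p : ℍ[ℝ])
    (hp₁ : C.im ≠ 0 → p = ((Real.cos (φ / 2) : ℝ) : ℍ[ℝ])
        + Real.sin (φ / 2) • (‖C.im‖⁻¹ • C.im))
    (hp₀ : C.im = 0 → p = 1) :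
    Real.cos (α / 2) ≤ (star p * q).re := by
  have hq_norm : ‖q‖ = 1 := hq ▸ norm_exp_of_re_eq_zero (by simp [hn_re])
  have hq_re : q.re = Real.cos (α / 2) := hq ▸ re_exp_smul_of_norm_eq_one hn_re hn_norm (α / 2)
  rcases eq_or_ne C.im 0 with hCim | hCim
  · simp [hp₀ hCim, hq_re]
  have hint : Integrable fun x => star (q * v x * star q) * v x := by
    by_contra h
    exact hCim (by rw [hC, integral_undef h, im_zero])
  have hCq : ⟪C, q⟫_ℝ = q.re := by
    rw [hC, inner_integral_star_conj_mul_self hint, hq_norm, hnorm]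
    ring
  have hC1 : ‖C‖ ≤ 1 := by
    simpa only [← hC, hq_norm, hnorm, one_pow, one_mul] using
      norm_integral_star_conj_mul_self_le (μ := volume) v q
  have hq_re_nonneg : 0 ≤ q.re :=
    hq_re ▸ Real.cos_nonneg_of_mem_Icc ⟨by linarith [Real.pi_pos], by linarith⟩
  rw [re_star_mul_eq_inner, hp₁ hCim, hφ, ← hq_re]
  exact re_le_inner_halfAngleRotor hq_re_nonneg hCq hC1 hCim

/-- Lemma 1 of the paper: applying the rotor encoded in the normalized geometric
cross correlation never increases the rotational misalignment. -/
theorem correlation_rotor_does_not_increase_misalignment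
    {m : ℕ} (v : EuclideanSpace ℝ (Fin m) → ℍ[ℝ])
    (hmeas : Measurable v)
    (hre : ∀ x, (v x).re = 0)
    (hnorm : ∫ x, ‖v x‖ ^ 2 = 1)
    (n : ℍ[ℝ]) (hn_re : n.re = 0) (hn_norm : ‖n‖ = 1)
    (α : ℝ) (hα0 : 0 ≤ α) (hαπ : α < Real.pi)
    (q C : ℍ[ℝ])
    (hq : q = NormedSpace.exp ((α / 2) • n))
    (hC : C = ∫ x, star (q * v x * star q) * v x)
    (φ : ℝ) (hφ : φ = Real.arccos (C.re / ‖C‖))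
    (p : ℍ[ℝ])
    (hp₁ : C.im ≠ 0 → p = ((Real.cos (φ / 2) : ℝ) : ℍ[ℝ])
        + Real.sin (φ / 2) • (‖C.im‖⁻¹ • C.im))
    (hp₀ : C.im = 0 → p = 1) :
    Real.cos (α / 2) ≤ (star p * q).re :=
  correlation_rotor_does_not_increase_misalignment_general v hnorm n hn_re hn_norm α hα0 hαπ q C hq
    hC φ hφ p hp₁ hp₀
end

section
/- (Example, field (11) of the paper.) Define v : ℝ³ → ℍ by v x = i + j if x ∈ (−1,1)³ and x₁ ≥ 0, v x = j if x ∈ (−1,1)³ and x₁ < 0, and v x = 0 otherwise, where i, j, k are the imaginary quaternion units. Take the outer rotation by angle π/2 about the axis j, i.e. q = exp((π/4) • j), and let C = ∫ star (q * v x * star q) * v x dx be the geometric cross correlation at the origin. Then re C = 8 and ‖im C‖ = 4 * Real.sqrt 3, so the detected rotation angle is Real.arccos (re C / ‖C‖) = Real.arctan (Real.sqrt 3 / 2), which is not the true angle π/2; moreover im C is not a real scalar multiple of j, so the detected rotation plane is not the true plane of rotation. -/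
open Quaternion MeasureTheory

/-- The imaginary quaternion unit `i` (corresponding to `e₁`). -/
def iQ : ℍ[ℝ] := ⟨0, 1, 0, 0⟩

/-- The imaginary quaternion unit `j` (corresponding to `e₂`). -/
def jQ : ℍ[ℝ] := ⟨0, 0, 1, 0⟩

/-- The vector field (11) of the paper: `e₁ + e₂` on the half `x₁ ≥ 0` of the
open cube `(-1,1)³`, `e₂` on the half `x₁ < 0`, and `0` outside the cube. -/
noncomputable def vField11 (x : EuclideanSpace ℝ (Fin 3)) : ℍ[ℝ] :=
  open Classical in
  if (∀ i, x i ∈ Set.Ioo (-1 : ℝ) 1) then (if 0 ≤ x 0 then iQ + jQ else jQ) else 0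

/-- The rotor of the outer rotation by `π/2` about the axis `j`. -/
noncomputable def rotor11 : ℍ[ℝ] := NormedSpace.exp ((Real.pi / 4) • jQ)

/-- The geometric cross correlation at the origin of the rotated copy of the
field (11) with the original field. -/
noncomputable def corr11 : ℍ[ℝ] :=
  ∫ x, star (rotor11 * vField11 x * star rotor11) * vField11 x

/-!
Conjugation by the rotor `q = (√2/2)(1 + j)` fixes `j` and sends `i` to `-k`, so the integrand
`star (q * v * star q) * v` equals `1 - i + j + k` on the half cube `x₁ ≥ 0` and `1` on the
half cube `x₁ < 0`. Both halves have volume `4`, hence `C = 8 + 4(-i + j + k)`: its bivector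
part has norm `4√3` and a nonzero `i`-component, and
`arccos (re C / ‖C‖) = arctan (‖im C‖ / re C) = arctan (√3/2)`.
-/

open Set

namespace Quaternion

lemma norm_eq_sqrt_sum_sq (a : ℍ[ℝ]) :
    ‖a‖ = √(a.re ^ 2 + a.imI ^ 2 + a.imJ ^ 2 + a.imK ^ 2) := by
  rw [norm_eq_sqrt_real_inner, inner_self, normSq_def']

lemma norm_sq_eq_re_sq_add_norm_im_sq (a : ℍ[ℝ]) : ‖a‖ ^ 2 = a.re ^ 2 + ‖a.im‖ ^ 2 := by
  simp only [sq, ← normSq_eq_norm_mul_self, normSq_def', re_im, imI_im, imJ_im, imK_im]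
  ring

lemma arccos_re_div_norm (a : ℍ[ℝ]) (ha : 0 < a.re) :
    Real.arccos (a.re / ‖a‖) = Real.arctan (‖a.im‖ / a.re) := by
  have hnorm : 0 < ‖a‖ := norm_pos_iff.2 fun h => by simp [h] at ha
  have hsin : 1 - (a.re / ‖a‖) ^ 2 = (‖a.im‖ / ‖a‖) ^ 2 := by
    rw [div_pow, div_pow, eq_div_iff (by positivity), sub_mul, one_mul,
      div_mul_cancel₀ _ (by positivity), norm_sq_eq_re_sq_add_norm_im_sq]
    ring
  rw [Real.arccos_eq_arctan (by positivity), hsin, Real.sqrt_sq (by positivity)]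
  congr 1
  field_simp

lemma exp_smul_of_re_eq_zero_of_norm_eq_one {u : ℍ[ℝ]} (hre : u.re = 0) (hnorm : ‖u‖ = 1)
    (t : ℝ) : NormedSpace.exp (t • u) = ↑(Real.cos t) + Real.sin t • u := by
  have hsin : Real.sin |t| / |t| * t = Real.sin t := by
    rcases eq_or_ne t 0 with rfl | ht
    · simp
    rcases abs_choice t with h | h <;> rw [h]
    · exact div_mul_cancel₀ _ ht
    · rw [Real.sin_neg, neg_div_neg_eq, div_mul_cancel₀ _ ht]
  rw [exp_of_re_eq_zero _ (by simp [hre]), norm_smul, hnorm, mul_one, Real.norm_eq_abs,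
    Real.cos_abs, smul_smul, hsin]

end Quaternion

section HalfCube

variable {E : Type*} [NormedAddCommGroup E] [NormedSpace ℝ E] [CompleteSpace E] {n : ℕ}

lemma volume_pi_cons_Ioo (s : Set ℝ) :
    volume (univ.pi (Fin.cons s fun _ => Ioo (-1) 1 : Fin (n + 1) → Set ℝ)) =
      volume s * 2 ^ n := by
  rw [volume_pi_pi, Fin.prod_univ_succ]
  simp only [Fin.cons_zero, Fin.cons_succ, Real.volume_Ioo, Finset.prod_const, Finset.card_univ,
    Fintype.card_fin]
  norm_num

lemma integral_indicator_cube_ite_pi (A B : E) :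
    ∫ x : Fin (n + 1) → ℝ, (univ.pi fun _ => Ioo (-1 : ℝ) 1).indicator
      (fun x => if 0 ≤ x 0 then A else B) x = (2 ^ n : ℝ) • (A + B) := by
  set Spos := univ.pi (Fin.cons (Ico 0 1) fun _ => Ioo (-1) 1 : Fin (n + 1) → Set ℝ)
  set Sneg := univ.pi (Fin.cons (Ioo (-1) 0) fun _ => Ioo (-1) 1 : Fin (n + 1) → Set ℝ)
  have hsplit : (univ.pi fun _ => Ioo (-1 : ℝ) 1).indicator (fun x => if 0 ≤ x 0 then A else B)
      = fun x => Spos.indicator (fun _ => A) x + Sneg.indicator (fun _ => B) x := by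
    ext x
    rcases lt_or_ge (x 0) 0 with h0 | h0
    · have h1 : x 0 < 1 := by linarith
      simp [Spos, Sneg, indicator, Fin.forall_fin_succ, h0, h1, not_le.2 h0]
    · have h1 : -1 < x 0 := by linarith
      simp [Spos, Sneg, indicator, Fin.forall_fin_succ, h0, h1, not_lt.2 h0]
  have hpos : volume Spos = 2 ^ n := by simp [Spos, volume_pi_cons_Ioo]
  have hneg : volume Sneg = 2 ^ n := by simp [Sneg, volume_pi_cons_Ioo]
  have hSpos : MeasurableSet Spos := MeasurableSet.univ_pi fun i => by
    cases i using Fin.cases <;> simp [measurableSet_Ico, measurableSet_Ioo]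
  have hSneg : MeasurableSet Sneg := MeasurableSet.univ_pi fun i => by
    cases i using Fin.cases <;> simp [measurableSet_Ioo]
  rw [hsplit, integral_add, integral_indicator_const _ hSpos, integral_indicator_const _ hSneg,
    measureReal_def, measureReal_def, hpos, hneg, smul_add]
  · simp
  · exact (integrable_indicator_iff hSpos).2 (integrableOn_const (by simp [hpos]))
  · exact (integrable_indicator_iff hSneg).2 (integrableOn_const (by simp [hneg]))

lemma integral_indicator_cube_ite (A B : E) :
    ∫ x : EuclideanSpace ℝ (Fin (n + 1)), {x | ∀ i, x i ∈ Ioo (-1 : ℝ) 1}.indicator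
      (fun x => if 0 ≤ x 0 then A else B) x = (2 ^ n : ℝ) • (A + B) := by
  rw [← integral_indicator_cube_ite_pi,
    ← (EuclideanSpace.volume_preserving_symm_measurableEquiv_toLp _).integral_comp']
  congr 1 with x
  classical
  simp only [Set.indicator_apply, mem_univ_pi, mem_ofPred_eq]
  rfl

end HalfCube

def kQ : ℍ[ℝ] := ⟨0, 0, 0, 1⟩

@[simp] lemma iQ_re : iQ.re = 0 := rfl
@[simp] lemma iQ_imI : iQ.imI = 1 := rfl
@[simp] lemma iQ_imJ : iQ.imJ = 0 := rfl
@[simp] lemma iQ_imK : iQ.imK = 0 := rfl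
@[simp] lemma jQ_re : jQ.re = 0 := rfl
@[simp] lemma jQ_imI : jQ.imI = 0 := rfl
@[simp] lemma jQ_imJ : jQ.imJ = 1 := rfl
@[simp] lemma jQ_imK : jQ.imK = 0 := rfl
@[simp] lemma kQ_re : kQ.re = 0 := rfl
@[simp] lemma kQ_imI : kQ.imI = 0 := rfl
@[simp] lemma kQ_imJ : kQ.imJ = 0 := rfl
@[simp] lemma kQ_imK : kQ.imK = 1 := rfl

lemma rotor11_eq : rotor11 = (√2 / 2 : ℝ) • (1 + jQ) := by
  have hjQ : ‖jQ‖ = 1 := by simp [norm_eq_sqrt_sum_sq]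
  rw [rotor11, exp_smul_of_re_eq_zero_of_norm_eq_one jQ_re hjQ, Real.cos_pi_div_four,
    Real.sin_pi_div_four, smul_add, ← coe_mul_eq_smul _ 1, mul_one]

lemma rotor11_conj_iQ : rotor11 * iQ * star rotor11 = -kQ := by
  have hs : √2 / 2 * (√2 / 2) = 1 / 2 := by ring_nf; norm_num
  ext <;> norm_num [rotor11_eq, re_mul, imI_mul, imJ_mul, imK_mul, hs]

lemma rotor11_conj_jQ : rotor11 * jQ * star rotor11 = jQ := by
  have hs : √2 / 2 * (√2 / 2) = 1 / 2 := by ring_nf; norm_num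
  ext <;> norm_num [rotor11_eq, re_mul, imI_mul, imJ_mul, imK_mul, hs]

lemma star_rotor11_conj_mul_self_iQ_add_jQ :
    star (rotor11 * (iQ + jQ) * star rotor11) * (iQ + jQ) = 1 - iQ + jQ + kQ := by
  rw [mul_add rotor11, add_mul _ _ (star rotor11), rotor11_conj_iQ, rotor11_conj_jQ]
  ext <;> simp [re_mul, imI_mul, imJ_mul, imK_mul]

lemma star_rotor11_conj_mul_self_jQ : star (rotor11 * jQ * star rotor11) * jQ = 1 := by
  rw [rotor11_conj_jQ]
  ext <;> simp [re_mul, imI_mul, imJ_mul, imK_mul]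

lemma vField11_eq_indicator :
    vField11 = {x | ∀ i, x i ∈ Ioo (-1 : ℝ) 1}.indicator
      (fun x => if 0 ≤ x 0 then iQ + jQ else jQ) := by
  classical
  funext x
  simp only [vField11, Set.indicator_apply, mem_ofPred_eq]

lemma corr11_eq : corr11 = ((8 : ℝ) : ℍ[ℝ]) + (4 : ℝ) • (-iQ + jQ + kQ) := by
  set g : ℍ[ℝ] → ℍ[ℝ] := fun w => star (rotor11 * w * star rotor11) * w with hg
  have hintegrand : (fun x => g (vField11 x)) = {x | ∀ i, x i ∈ Ioo (-1 : ℝ) 1}.indicator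
      (fun x => if 0 ≤ x 0 then g (iQ + jQ) else g jQ) := by
    rw [vField11_eq_indicator, ← Function.comp_def, ← Set.indicator_comp_of_zero (by simp [hg])]
    congr 1
    funext x
    exact apply_ite g (0 ≤ x 0) _ _
  rw [corr11, hintegrand, integral_indicator_cube_ite]
  simp only [hg, star_rotor11_conj_mul_self_iQ_add_jQ, star_rotor11_conj_mul_self_jQ]
  ext <;> norm_num

/-- Example, field (11): the geometric correlation with the copy rotated by
`π/2` about the axis `j` has scalar part `8` and bivector part of norm
`4√3`, so the detected angle `arctan (√3/2)` is not the true angle `π/2`,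
and the detected rotation plane (the bivector part) is not a real scalar
multiple of `j`, i.e. not the true plane of rotation. -/
theorem example_field11_detects_wrong_plane_and_angle :
    corr11.re = 8 ∧ ‖corr11.im‖ = 4 * Real.sqrt 3 ∧
      Real.arccos (corr11.re / ‖corr11‖) = Real.arctan (Real.sqrt 3 / 2) ∧
      Real.arctan (Real.sqrt 3 / 2) ≠ Real.pi / 2 ∧
      ¬∃ t : ℝ, corr11.im = t • jQ := by
  have hre : corr11.re = 8 := by simp [corr11_eq]
  have him : corr11.im = (4 : ℝ) • (-iQ + jQ + kQ) := by rw [corr11_eq]; ext <;> simp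
  have him_norm : ‖corr11.im‖ = 4 * √3 := by
    rw [him, norm_smul, norm_eq_sqrt_sum_sq]
    norm_num
  refine ⟨hre, him_norm, ?_, (Real.arctan_lt_pi_div_two _).ne, ?_⟩
  · rw [arccos_re_div_norm _ (by rw [hre]; norm_num), hre, him_norm]
    ring_nf
  · rintro ⟨t, ht⟩
    have himI := congrArg QuaternionAlgebra.imI (him.symm.trans ht)
    norm_num at himI
end
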